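/- Let n ≥ 2 and let c : {0,…,n}² → {red, yellow, black} be any colouring satisfying: c(x,y) = red whenever x = 0; c(x,y) = yellow whenever y = 0 and x > 0; c(x,y) = black whenever x > 0, y > 0, and (x = n or y = n). Then there exist 0 ≤ x ≤ n−1 and 0 ≤ y ≤ n−1 such that the four grid points (x,y), (x+1,y), (x,y+1), (x+1,y+1) together carry all three colours. -/

import Mathlib

/-!
Count, modulo 2, the grid edges whose endpoints are coloured red and yellow. Around a unit square
that misses some colour this count is even: if black is missing the colour changes an even number
of times along the closed rim, and otherwise no red–yellow edge occurs at all. Summing over all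
unit squares, every interior edge is counted twice, so the total is the count along the boundary
of the grid, which is odd: the only red–yellow boundary edge is the one from `(0,0)` to `(1,0)`.
-/

/-- Colours for the 2-dimensional grid colouring: `red`, `yellow`, `black`. -/
inductive GridColour : Type
  | red : GridColour
  | yellow : GridColour
  | black : GridColour
deriving DecidableEq

open Finset GridColour

instance : Fintype GridColour :=
  ⟨{red, yellow, black}, fun x => by cases x <;> simp⟩

theorem sum_range_sum_range_circulation {G : Type*} [AddCommGroup G] (h v : ℕ → ℕ → G)
    (m n : ℕ) :
    ∑ x ∈ range m, ∑ y ∈ range n, ((h x (y + 1) - h x y) - (v (x + 1) y - v x y)) =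
      ∑ x ∈ range m, (h x n - h x 0) - ∑ y ∈ range n, (v m y - v 0 y) := by
  rw [← sum_congr rfl fun x _ => sum_range_sub (h x) n,
    ← sum_congr rfl fun y _ => sum_range_sub (v · y) m, sum_comm (s := range n),
    ← sum_sub_distrib]
  simp only [sum_sub_distrib]

namespace GridColour

def redYellow (a b : GridColour) : ZMod 2 :=
  if (a = red ∧ b = yellow) ∨ (a = yellow ∧ b = red) then 1 else 0

theorem redYellow_self (a : GridColour) : redYellow a a = 0 := by
  cases a <;> rfl

theorem redYellow_black (a : GridColour) : redYellow a black = 0 := by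
  cases a <;> rfl

theorem redYellow_circulation_eq_zero (a₀₀ a₁₀ a₀₁ a₁₁ : GridColour)
    (h : ∃ col, col ∉ [a₀₀, a₁₀, a₀₁, a₁₁]) :
    (redYellow a₀₁ a₁₁ - redYellow a₀₀ a₁₀) - (redYellow a₁₀ a₁₁ - redYellow a₀₀ a₀₁) = 0 := by
  revert h; revert a₀₀ a₁₀ a₀₁ a₁₁; decide

end GridColour

section BoundaryColouring

variable {n : ℕ} {c : ℕ → ℕ → GridColour}

theorem sum_redYellow_bottom_eq_one (hn : 0 < n) (hred : ∀ y, y ≤ n → c 0 y = red)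
    (hyellow : ∀ x, 0 < x → x ≤ n → c x 0 = yellow) :
    ∑ x ∈ range n, redYellow (c x 0) (c (x + 1) 0) = 1 := by
  rw [sum_eq_single_of_mem 0 (mem_range.2 hn)]
  · rw [hred 0 (Nat.zero_le n), hyellow 1 one_pos hn]
    rfl
  · intro x hx hx0
    have hx := mem_range.1 hx
    rw [hyellow x (by omega) hx.le, hyellow (x + 1) (by omega) hx, redYellow_self]

theorem redYellow_top_eq_zero
    (hblack : ∀ x y, 0 < x → 0 < y → x ≤ n → y ≤ n → (x = n ∨ y = n) → c x y = black)
    {x : ℕ} (hx : x < n) :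
    redYellow (c x n) (c (x + 1) n) = 0 := by
  rw [hblack (x + 1) n x.succ_pos (by omega) hx le_rfl (Or.inr rfl), redYellow_black]

theorem redYellow_right_eq_zero
    (hblack : ∀ x y, 0 < x → 0 < y → x ≤ n → y ≤ n → (x = n ∨ y = n) → c x y = black)
    (hn : 0 < n) {y : ℕ} (hy : y < n) :
    redYellow (c n y) (c n (y + 1)) = 0 := by
  rw [hblack n (y + 1) hn y.succ_pos le_rfl hy (Or.inl rfl), redYellow_black]

theorem redYellow_left_eq_zero (hred : ∀ y, y ≤ n → c 0 y = red) {y : ℕ} (hy : y < n) :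
    redYellow (c 0 y) (c 0 (y + 1)) = 0 := by
  rw [hred y hy.le, hred (y + 1) hy, redYellow_self]

end BoundaryColouring

open GridColour in
/-- Any colouring of the grid `{0,…,n}²` (n ≥ 2) that is red on the left edge,
yellow on the rest of the bottom edge, and black on the rest of the right and
top edges, has a unit square whose four corners carry all three colours. -/
theorem exists_trichromatic_unit_square (n : ℕ) (hn : 2 ≤ n)
    (c : ℕ → ℕ → GridColour)
    (hred : ∀ y, y ≤ n → c 0 y = red)
    (hyellow : ∀ x, 0 < x → x ≤ n → c x 0 = yellow)
    (hblack : ∀ x y, 0 < x → 0 < y → x ≤ n → y ≤ n → (x = n ∨ y = n) → c x y = black) :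
    ∃ x y, x ≤ n - 1 ∧ y ≤ n - 1 ∧
      ∀ col : GridColour,
        ∃ p ∈ [(x, y), (x + 1, y), (x, y + 1), (x + 1, y + 1)], c p.1 p.2 = col := by
  by_contra! hnone
  have hn₀ : 0 < n := by omega
  have hcirc := sum_range_sum_range_circulation
    (fun x y => redYellow (c x y) (c (x + 1) y)) (fun x y => redYellow (c x y) (c x (y + 1))) n n
  have hsquares : ∀ x ∈ range n, ∀ y ∈ range n,
      (redYellow (c x (y + 1)) (c (x + 1) (y + 1)) - redYellow (c x y) (c (x + 1) y)) -
        (redYellow (c (x + 1) y) (c (x + 1) (y + 1)) - redYellow (c x y) (c x (y + 1))) = 0 := by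
    intro x hx y hy
    obtain ⟨col, hcol⟩ := hnone x y (Nat.le_sub_one_of_lt (mem_range.1 hx))
      (Nat.le_sub_one_of_lt (mem_range.1 hy))
    exact redYellow_circulation_eq_zero _ _ _ _ ⟨col, by simpa [eq_comm] using hcol⟩
  rw [sum_eq_zero fun x hx => sum_eq_zero (hsquares x hx),
    sum_sub_distrib, sum_redYellow_bottom_eq_one hn₀ hred hyellow,
    sum_eq_zero fun x hx => redYellow_top_eq_zero hblack (mem_range.1 hx),
    sum_sub_distrib, sum_eq_zero fun y hy => redYellow_right_eq_zero hblack hn₀ (mem_range.1 hy),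
    sum_eq_zero fun y hy => redYellow_left_eq_zero hred (mem_range.1 hy)] at hcirc
  exact absurd hcirc (by decide)
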